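/- arXiv:2603.00580 — 4 statements merged into one kernel-verified Lean document; each statement's English description precedes it below -/
import Mathlib

section
/- Let F⁻¹ : (0,1) → ℝ be a nondecreasing integrable quantile function and α ∈ (0,1). Among all bounded measurable weight functions w : [0,1] → [0, 1/(1−α)] with ∫₀¹ w(u) du = 1, the weighted integral ∫₀¹ F⁻¹(u) w(u) du is maximized by w(u) = 1{u ∈ (α,1]}/(1−α) and minimized by w(u) = 1{u ∈ [0,1−α]}/(1−α). In particular, for any such w, (1/(1−α)) ∫₀^{1−α} F⁻¹(u) du ≤ ∫₀¹ F⁻¹(u) w(u) du ≤ (1/(1−α)) ∫_α¹ F⁻¹(u) du. -/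
/-!
If `f` is nondecreasing and `g - h` changes sign only once, from `+` to `-`, at `t`, then
`(f - f t) * (g - h) ≤ 0` pointwise; integrating, the term `f t * ∫ (g - h)` vanishes when
`∫ g = ∫ h`, so `∫ f g ≤ ∫ f h`. A weight `0 ≤ w ≤ M` with `∫ w = 1` crosses the weight
`M · 1_(α,1]` in this way at `α`, and is crossed by `M · 1_[0,1-α]` at `1 - α`.
-/

open MeasureTheory Set

theorem integral_mul_le_integral_mul_of_crossing {f g h : ℝ → ℝ} {a b t : ℝ}
    (ht : t ∈ Ioo a b) (hf : MonotoneOn f (Ioo a b))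
    (hg : IntervalIntegrable g volume a b) (hh : IntervalIntegrable h volume a b)
    (hfg : IntervalIntegrable (fun u => f u * g u) volume a b)
    (hfh : IntervalIntegrable (fun u => f u * h u) volume a b)
    (hgh : ∫ u in a..b, g u = ∫ u in a..b, h u)
    (hleft : ∀ u ∈ Ioc a t, h u ≤ g u) (hright : ∀ u ∈ Ioo t b, g u ≤ h u) :
    ∫ u in a..b, f u * g u ≤ ∫ u in a..b, f u * h u := by
  have hpointwise : ∀ u ∈ Ioo a b, (f u - f t) * (g u - h u) ≤ 0 := by
    intro u hu
    rcases le_or_gt u t with hut | htu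
    · exact mul_nonpos_of_nonpos_of_nonneg (sub_nonpos.2 (hf hu ht hut))
        (sub_nonneg.2 (hleft u ⟨hu.1, hut⟩))
    · exact mul_nonpos_of_nonneg_of_nonpos (sub_nonneg.2 (hf ht hu htu.le))
        (sub_nonpos.2 (hright u ⟨htu, hu.2⟩))
  have hnonpos : ∫ u in a..b, (f u - f t) * (g u - h u) ≤ 0 := by
    rw [intervalIntegral.integral_of_le (ht.1.trans ht.2).le, integral_Ioc_eq_integral_Ioo]
    exact setIntegral_nonpos measurableSet_Ioo hpointwise
  have hexpand : ∫ u in a..b, (f u - f t) * (g u - h u)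
      = (∫ u in a..b, f u * g u) - (∫ u in a..b, f u * h u)
          - f t * ((∫ u in a..b, g u) - ∫ u in a..b, h u) := by
    have hfun : (fun u => (f u - f t) * (g u - h u))
        = fun u => (f u * g u - f u * h u) - f t * (g u - h u) := by ext; ring
    rw [hfun, intervalIntegral.integral_sub (hfg.sub hfh) ((hg.sub hh).const_mul _),
      intervalIntegral.integral_sub hfg hfh, intervalIntegral.integral_const_mul,
      intervalIntegral.integral_sub hg hh]
  rw [hexpand, hgh, sub_self, mul_zero, sub_zero] at hnonpos
  linarith

theorem IntervalIntegrable.mul_of_mem_Icc {f g : ℝ → ℝ} {a b C : ℝ} (hab : a ≤ b)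
    (hf : IntervalIntegrable f volume a b) (hg : Measurable g)
    (hgb : ∀ u ∈ Icc a b, g u ∈ Icc 0 C) :
    IntervalIntegrable (fun u => f u * g u) volume a b := by
  rw [intervalIntegrable_iff_integrableOn_Ioc_of_le hab] at hf ⊢
  refine hf.mul_bdd (c := C) hg.aestronglyMeasurable
    (ae_restrict_of_forall_mem measurableSet_Ioc fun u hu => ?_)
  obtain ⟨hg0, hgC⟩ := hgb u (Ioc_subset_Icc_self hu)
  rwa [Real.norm_eq_abs, abs_of_nonneg hg0]

theorem integral_mul_le_integral_mul_of_crossing_of_mem_Icc {f g h : ℝ → ℝ} {a b t M : ℝ}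
    (ht : t ∈ Ioo a b) (hf : MonotoneOn f (Ioo a b)) (hfi : IntervalIntegrable f volume a b)
    (hg : Measurable g) (hgb : ∀ u ∈ Icc a b, g u ∈ Icc 0 M)
    (hh : Measurable h) (hhb : ∀ u ∈ Icc a b, h u ∈ Icc 0 M)
    (hgh : ∫ u in a..b, g u = ∫ u in a..b, h u)
    (hleft : ∀ u ∈ Ioc a t, h u ≤ g u) (hright : ∀ u ∈ Ioo t b, g u ≤ h u) :
    ∫ u in a..b, f u * g u ≤ ∫ u in a..b, f u * h u := by
  have hab : a ≤ b := (ht.1.trans ht.2).le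
  have hone : IntervalIntegrable (fun _ => (1 : ℝ)) volume a b := intervalIntegrable_const
  exact integral_mul_le_integral_mul_of_crossing ht hf
    (by simpa using hone.mul_of_mem_Icc hab hg hgb) (by simpa using hone.mul_of_mem_Icc hab hh hhb)
    (hfi.mul_of_mem_Icc hab hg hgb) (hfi.mul_of_mem_Icc hab hh hhb) hgh hleft hright

section IndicatorWeights

variable {a b t M : ℝ}

theorem indicator_const_mem_Icc (hM : 0 ≤ M) (s : Set ℝ) (u : ℝ) :
    s.indicator (fun _ => M) u ∈ Icc 0 M := by
  by_cases hu : u ∈ s <;> simp [hu, hM]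

theorem intervalIntegral_mul_indicator_const (f : ℝ → ℝ) {c d : ℝ} {s : Set ℝ}
    (hs : MeasurableSet s) (hab : a ≤ b) (hcd : c ≤ d) (hinter : Ioc a b ∩ s = Ioc c d) :
    ∫ u in a..b, f u * s.indicator (fun _ => M) u = M * ∫ u in c..d, f u := by
  simp_rw [← indicator_mul_right]
  rw [intervalIntegral.integral_of_le hab, setIntegral_indicator hs, hinter,
    intervalIntegral.integral_of_le hcd, ← integral_const_mul]
  simp_rw [mul_comm]

theorem intervalIntegral_mul_indicator_Ioc (f : ℝ → ℝ) (ht : t ∈ Icc a b) :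
    ∫ u in a..b, f u * (Ioc t b).indicator (fun _ => M) u = M * ∫ u in t..b, f u :=
  intervalIntegral_mul_indicator_const f measurableSet_Ioc (ht.1.trans ht.2) ht.2
    (by rw [Ioc_inter_Ioc, max_eq_right ht.1, min_self])

theorem intervalIntegral_mul_indicator_Icc (f : ℝ → ℝ) (ht : t ∈ Icc a b) :
    ∫ u in a..b, f u * (Icc a t).indicator (fun _ => M) u = M * ∫ u in a..t, f u :=
  intervalIntegral_mul_indicator_const f measurableSet_Icc (ht.1.trans ht.2) ht.1
    (by ext u; simp only [mem_inter_iff, mem_Ioc, mem_Icc]; grind)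

variable {f w : ℝ → ℝ}

theorem integral_mul_le_integral_mul_indicator_Ioc (ht : t ∈ Ioo a b)
    (hf : MonotoneOn f (Ioo a b)) (hfi : IntervalIntegrable f volume a b)
    (hw : Measurable w) (hwb : ∀ u ∈ Icc a b, w u ∈ Icc 0 M)
    (hw1 : ∫ u in a..b, w u = M * (b - t)) :
    ∫ u in a..b, f u * w u ≤ ∫ u in a..b, f u * (Ioc t b).indicator (fun _ => M) u := by
  have hM : 0 ≤ M := (hwb t (Ioo_subset_Icc_self ht)).1.trans (hwb t (Ioo_subset_Icc_self ht)).2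
  refine integral_mul_le_integral_mul_of_crossing_of_mem_Icc ht hf hfi hw hwb
    (measurable_const.indicator measurableSet_Ioc) (fun u _ => indicator_const_mem_Icc hM _ u)
    ?_ ?_ ?_
  · simpa [hw1] using (intervalIntegral_mul_indicator_Ioc (M := M) (fun _ => 1)
      (Ioo_subset_Icc_self ht)).symm
  · intro u hu
    rw [indicator_of_notMem fun h => hu.2.not_gt h.1]
    exact (hwb u ⟨hu.1.le, hu.2.trans ht.2.le⟩).1
  · intro u hu
    rw [indicator_of_mem (show u ∈ Ioc t b from ⟨hu.1, hu.2.le⟩)]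
    exact (hwb u ⟨(ht.1.trans hu.1).le, hu.2.le⟩).2

theorem integral_mul_indicator_Icc_le_integral_mul (ht : t ∈ Ioo a b)
    (hf : MonotoneOn f (Ioo a b)) (hfi : IntervalIntegrable f volume a b)
    (hw : Measurable w) (hwb : ∀ u ∈ Icc a b, w u ∈ Icc 0 M)
    (hw1 : ∫ u in a..b, w u = M * (t - a)) :
    ∫ u in a..b, f u * (Icc a t).indicator (fun _ => M) u ≤ ∫ u in a..b, f u * w u := by
  have hM : 0 ≤ M := (hwb t (Ioo_subset_Icc_self ht)).1.trans (hwb t (Ioo_subset_Icc_self ht)).2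
  refine integral_mul_le_integral_mul_of_crossing_of_mem_Icc ht hf hfi
    (measurable_const.indicator measurableSet_Icc) (fun u _ => indicator_const_mem_Icc hM _ u)
    hw hwb ?_ ?_ ?_
  · simpa [hw1] using intervalIntegral_mul_indicator_Icc (M := M) (fun _ => 1)
      (Ioo_subset_Icc_self ht)
  · intro u hu
    rw [indicator_of_mem (show u ∈ Icc a t from ⟨hu.1.le, hu.2⟩)]
    exact (hwb u ⟨hu.1.le, hu.2.trans ht.2.le⟩).2
  · intro u hu
    rw [indicator_of_notMem fun h => hu.1.not_ge h.2]
    exact (hwb u ⟨(ht.1.trans hu.1).le, hu.2.le⟩).1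

end IndicatorWeights

theorem stmt_7_general (α : ℝ) (hα : α ∈ Set.Ioo (0 : ℝ) 1)
    (Finv : ℝ → ℝ) (hmono : MonotoneOn Finv (Set.Ioo 0 1))
    (hFi : IntervalIntegrable Finv volume 0 1)
    (w : ℝ → ℝ) (hwm : Measurable w)
    (hwb : ∀ u ∈ Set.Icc (0 : ℝ) 1, w u ∈ Set.Icc (0 : ℝ) (1 - α)⁻¹)
    (hw1 : (∫ u in (0 : ℝ)..1, w u) = 1) :
    ((1 - α)⁻¹ * (∫ u in (0 : ℝ)..(1 - α), Finv u) ≤ ∫ u in (0 : ℝ)..1, Finv u * w u) ∧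
      ((∫ u in (0 : ℝ)..1, Finv u * w u) ≤ (1 - α)⁻¹ * (∫ u in α..(1 : ℝ), Finv u)) ∧
      ((∫ u in (0 : ℝ)..1,
          Finv u * Set.indicator (Set.Ioc α 1) (fun _ => (1 - α)⁻¹) u)
        = (1 - α)⁻¹ * (∫ u in α..(1 : ℝ), Finv u)) ∧
      ((∫ u in (0 : ℝ)..1,
          Finv u * Set.indicator (Set.Icc 0 (1 - α)) (fun _ => (1 - α)⁻¹) u)
        = (1 - α)⁻¹ * (∫ u in (0 : ℝ)..(1 - α), Finv u)) := by
  have hα' : 1 - α ∈ Ioo (0 : ℝ) 1 := ⟨by linarith [hα.2], by linarith [hα.1]⟩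
  have hmass : (∫ u in (0 : ℝ)..1, w u) = (1 - α)⁻¹ * (1 - α) := by
    rw [hw1, inv_mul_cancel₀ hα'.1.ne']
  have hupper := integral_mul_le_integral_mul_indicator_Ioc hα hmono hFi hwm hwb hmass
  have hlower := integral_mul_indicator_Icc_le_integral_mul hα' hmono hFi hwm hwb
    (by rwa [sub_zero])
  have hIoc := intervalIntegral_mul_indicator_Ioc (M := (1 - α)⁻¹) Finv (Ioo_subset_Icc_self hα)
  have hIcc := intervalIntegral_mul_indicator_Icc (M := (1 - α)⁻¹) Finv (Ioo_subset_Icc_self hα')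
  exact ⟨hIcc ▸ hlower, hIoc ▸ hupper, hIoc, hIcc⟩

/-- Among bounded measurable weights `w : [0,1] → [0, 1/(1−α)]` with `∫₀¹ w = 1`, the weighted
integral `∫₀¹ F⁻¹ w` of a nondecreasing integrable quantile function `F⁻¹` is maximized by the
weight `1{(α,1]}/(1−α)` and minimized by `1{[0,1−α]}/(1−α)`; in particular it lies between
`(1/(1−α)) ∫₀^{1−α} F⁻¹` and `(1/(1−α)) ∫_α¹ F⁻¹`. -/
theorem stmt_7 (α : ℝ) (hα : α ∈ Set.Ioo (0 : ℝ) 1)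
    (Finv : ℝ → ℝ) (hmono : MonotoneOn Finv (Set.Ioo 0 1))
    (hFi : IntervalIntegrable Finv volume 0 1)
    (w : ℝ → ℝ) (hwm : Measurable w)
    (hwb : ∀ u ∈ Set.Icc (0 : ℝ) 1, w u ∈ Set.Icc (0 : ℝ) (1 - α)⁻¹)
    (hw1 : (∫ u in (0 : ℝ)..1, w u) = 1)
    (hprod : IntervalIntegrable (fun u => Finv u * w u) volume 0 1) :
    ((1 - α)⁻¹ * (∫ u in (0 : ℝ)..(1 - α), Finv u) ≤ ∫ u in (0 : ℝ)..1, Finv u * w u) ∧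
      ((∫ u in (0 : ℝ)..1, Finv u * w u) ≤ (1 - α)⁻¹ * (∫ u in α..(1 : ℝ), Finv u)) ∧
      ((∫ u in (0 : ℝ)..1,
          Finv u * Set.indicator (Set.Ioc α 1) (fun _ => (1 - α)⁻¹) u)
        = (1 - α)⁻¹ * (∫ u in α..(1 : ℝ), Finv u)) ∧
      ((∫ u in (0 : ℝ)..1,
          Finv u * Set.indicator (Set.Icc 0 (1 - α)) (fun _ => (1 - α)⁻¹) u)
        = (1 - α)⁻¹ * (∫ u in (0 : ℝ)..(1 - α), Finv u)) :=
  stmt_7_general α hα Finv hmono hFi w hwm hwb hw1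
end

section
/- Let C₁ and C₂ be bivariate copulas with C₁ ≤ C₂ pointwise on [0,1]² (concordance order), and let F⁻¹ : (0,1) → ℝ be a nondecreasing bounded quantile function. Fix α ∈ (0,1) and suppose the conditional distributions Cⱼ(α|u) := ∂Cⱼ(u,α)/∂u exist for a.e. u. Then ∫₀¹ F⁻¹(u) (1 − C₁(α|u))/(1−α) du ≤ ∫₀¹ F⁻¹(u) (1 − C₂(α|u))/(1−α) du. -/
open MeasureTheory Set

/-! Put `g = c₁ - c₂`. Then `G t = ∫₀ᵗ g = C₁(t,α) - C₂(t,α) ≤ 0` with `G 1 = 0`, and the claim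
reduces to `0 ≤ ∫₀¹ F⁻¹ g`. After shifting `F⁻¹` by its bound it is nonnegative, and a nonnegative
nondecreasing `f` lies uniformly within `ε` of `ε ∑ⱼ 1{(j+1)ε ≤ f}`, a sum of indicators of
up-intervals `(c,1)` of `(0,1)`; over each of them `∫ g = -G c ≥ 0`. This is a discretised
integration by parts against the nondecreasing `F⁻¹`. -/

/-- A bivariate copula on `[0,1]²`: grounded, with uniform margins, and 2-increasing. -/
structure Copula where
  toFun : ℝ → ℝ → ℝ
  grounded_left : ∀ v ∈ Set.Icc (0 : ℝ) 1, toFun 0 v = 0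
  grounded_bot : ∀ u ∈ Set.Icc (0 : ℝ) 1, toFun u 0 = 0
  margin_left : ∀ v ∈ Set.Icc (0 : ℝ) 1, toFun 1 v = v
  margin_right : ∀ u ∈ Set.Icc (0 : ℝ) 1, toFun u 1 = u
  two_increasing : ∀ u₁ ∈ Set.Icc (0 : ℝ) 1, ∀ u₂ ∈ Set.Icc (0 : ℝ) 1,
    ∀ v₁ ∈ Set.Icc (0 : ℝ) 1, ∀ v₂ ∈ Set.Icc (0 : ℝ) 1, u₁ ≤ u₂ → v₁ ≤ v₂ →
      0 ≤ toFun u₂ v₂ - toFun u₁ v₂ - toFun u₂ v₁ + toFun u₁ v₁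

theorem abs_sub_sum_ite_le {ε y : ℝ} (N : ℕ) (hε : 0 < ε) (hy : 0 ≤ y) (hyN : y ≤ N * ε) :
    |y - ∑ j ∈ Finset.range N, if ((j : ℝ) + 1) * ε ≤ y then ε else 0| ≤ ε := by
  have hx : 0 ≤ y / ε := div_nonneg hy hε.le
  have hfloor : ⌊y / ε⌋₊ ≤ N := Nat.floor_le_of_le ((div_le_iff₀ hε).2 hyN)
  have hfilter : (Finset.range N).filter (fun j : ℕ => ((j : ℝ) + 1) * ε ≤ y)
      = Finset.range ⌊y / ε⌋₊ := by
    ext j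
    rw [Finset.mem_filter, Finset.mem_range, Finset.mem_range, ← le_div_iff₀ hε,
      Nat.lt_iff_add_one_le, ← Nat.cast_add_one, ← Nat.le_floor_iff hx]
    exact ⟨fun h => h.2, fun h => ⟨by omega, h⟩⟩
  rw [← Finset.sum_filter, Finset.sum_const, hfilter, Finset.card_range, nsmul_eq_mul, abs_le]
  have hlow := (le_div_iff₀ hε).1 (Nat.floor_le hx)
  have hup := (div_lt_iff₀ hε).1 (Nat.lt_floor_add_one (y / ε))
  constructor <;> linarith

theorem setIntegral_nonneg_of_tail_nonneg {g : ℝ → ℝ} {a b : ℝ} {U : Set ℝ}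
    (hU : U ⊆ Ioo a b) (hUup : ∀ u ∈ U, ∀ v ∈ Ioo a b, u ≤ v → v ∈ U)
    (htail : ∀ t ∈ Icc a b, 0 ≤ ∫ u in t..b, g u) :
    0 ≤ ∫ u in U, g u := by
  rcases U.eq_empty_or_nonempty with rfl | hne
  · simp
  have hbdd : BddBelow U := ⟨a, fun u hu => (hU hu).1.le⟩
  have hU_Icc : U ⊆ Icc (sInf U) b := fun u hu => ⟨csInf_le hbdd hu, (hU hu).2.le⟩
  have hIoo_U : Ioo (sInf U) b ⊆ U := fun v hv => by
    obtain ⟨u, hu, huv⟩ := exists_lt_of_csInf_lt hne hv.1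
    exact hUup u hu v ⟨(hU hu).1.trans huv, hv.2⟩ huv.le
  have hinf : sInf U ∈ Icc a b :=
    ⟨le_csInf hne fun u hu => (hU hu).1.le, (hU_Icc hne.some_mem).1.trans (hU hne.some_mem).2.le⟩
  have hae : U =ᵐ[volume] Ioo (sInf U) b :=
    (hU_Icc.eventuallyLE.trans Ioo_ae_eq_Icc.symm.le).antisymm hIoo_U.eventuallyLE
  rw [setIntegral_congr_set hae, ← integral_Ioc_eq_integral_Ioo,
    ← intervalIntegral.integral_of_le hinf.2]
  exact htail _ hinf

theorem integrableOn_mul_of_monotoneOn {f g : ℝ → ℝ} {s : Set ℝ} {M : ℝ} (hs : MeasurableSet s)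
    (hf : MonotoneOn f s) (hfM : ∀ u ∈ s, |f u| ≤ M) (hg : IntegrableOn g s) :
    IntegrableOn (fun u => f u * g u) s :=
  hg.bdd_mul (aemeasurable_restrict_of_monotoneOn hs hf).aestronglyMeasurable
    (ae_restrict_of_forall_mem hs hfM)

theorem intervalIntegrable_mul_of_monotoneOn {f g : ℝ → ℝ} {a b M : ℝ} (hab : a ≤ b)
    (hf : MonotoneOn f (Ioo a b)) (hfM : ∀ u ∈ Ioo a b, |f u| ≤ M)
    (hg : IntervalIntegrable g volume a b) :
    IntervalIntegrable (fun u => f u * g u) volume a b := by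
  rw [intervalIntegrable_iff_integrableOn_Ioo_of_le hab] at hg ⊢
  exact integrableOn_mul_of_monotoneOn measurableSet_Ioo hf hfM hg

theorem neg_mul_le_setIntegral_mul_of_monotoneOn {f g : ℝ → ℝ} {a b M ε : ℝ}
    (hf : MonotoneOn f (Ioo a b)) (hf0 : ∀ u ∈ Ioo a b, 0 ≤ f u) (hfM : ∀ u ∈ Ioo a b, f u ≤ M)
    (hg : IntegrableOn g (Ioo a b)) (htail : ∀ t ∈ Icc a b, 0 ≤ ∫ u in t..b, g u) (hε : 0 < ε) :
    -(ε * ∫ u in Ioo a b, |g u|) ≤ ∫ u in Ioo a b, f u * g u := by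
  obtain ⟨N, hN⟩ : ∃ N : ℕ, M ≤ N * ε := ⟨⌈M / ε⌉₊, (div_le_iff₀ hε).1 (Nat.le_ceil _)⟩
  set U : ℕ → Set ℝ := fun j => {u ∈ Ioo a b | ((j : ℝ) + 1) * ε ≤ f u}
  set φ : ℝ → ℝ := fun u => ∑ j ∈ Finset.range N, (U j).indicator (fun _ => ε) u
  have hU_up : ∀ j, ∀ u ∈ U j, ∀ v ∈ Ioo a b, u ≤ v → v ∈ U j :=
    fun j u hu v hv huv => ⟨hv, hu.2.trans (hf hu.1 hv huv)⟩
  have hU_meas : ∀ j, MeasurableSet (U j) := fun j =>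
    OrdConnected.measurableSet ⟨fun u hu v hv w hw =>
      hU_up j u hu w ⟨hu.1.1.trans_le hw.1, hw.2.trans_lt hv.1.2⟩ hw.1⟩
  have hterm : ∀ j u, (U j).indicator (fun _ => ε) u * g u = (U j).indicator (fun u => ε * g u) u :=
    fun _ _ => (indicator_mul_left _ _ _).symm
  have hφg_int : IntegrableOn (fun u => φ u * g u) (Ioo a b) := by
    simp_rw [φ, Finset.sum_mul, hterm]
    exact integrable_finsetSum _ fun j _ => (hg.const_mul ε).indicator (hU_meas j)
  have hφg_nonneg : 0 ≤ ∫ u in Ioo a b, φ u * g u := by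
    simp_rw [φ, Finset.sum_mul, hterm]
    rw [integral_finsetSum _ fun j _ => (hg.const_mul ε).indicator (hU_meas j)]
    refine Finset.sum_nonneg fun j _ => ?_
    rw [setIntegral_indicator (hU_meas j), inter_eq_right.2 (sep_subset _ _), integral_const_mul]
    exact mul_nonneg hε.le (setIntegral_nonneg_of_tail_nonneg (sep_subset _ _) (hU_up j) htail)
  have hφ_close : ∀ u ∈ Ioo a b, |f u - φ u| ≤ ε := fun u hu => by
    have hφu : φ u = ∑ j ∈ Finset.range N, if ((j : ℝ) + 1) * ε ≤ f u then ε else 0 := by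
      simp [φ, U, indicator_apply, hu.1, hu.2]
    rw [hφu]
    exact abs_sub_sum_ite_le N hε (hf0 u hu) ((hfM u hu).trans hN)
  have hfg_int : IntegrableOn (fun u => f u * g u) (Ioo a b) :=
    integrableOn_mul_of_monotoneOn measurableSet_Ioo hf
      (fun u hu => (abs_of_nonneg (hf0 u hu)).trans_le (hfM u hu)) hg
  have herr : |∫ u in Ioo a b, (f u - φ u) * g u| ≤ ε * ∫ u in Ioo a b, |g u| := by
    rw [← integral_const_mul, ← Real.norm_eq_abs]
    refine norm_integral_le_of_norm_le (hg.abs.const_mul ε)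
      (ae_restrict_of_forall_mem measurableSet_Ioo fun u hu => ?_)
    rw [Real.norm_eq_abs, abs_mul]
    exact mul_le_mul_of_nonneg_right (hφ_close u hu) (abs_nonneg _)
  have hsplit : ∫ u in Ioo a b, (f u - φ u) * g u
      = (∫ u in Ioo a b, f u * g u) - ∫ u in Ioo a b, φ u * g u := by
    simp_rw [sub_mul]
    exact integral_sub hfg_int hφg_int
  rw [hsplit] at herr
  linarith [(abs_le.1 herr).1]

theorem setIntegral_mul_nonneg_of_monotoneOn {f g : ℝ → ℝ} {a b M : ℝ}
    (hf : MonotoneOn f (Ioo a b)) (hf0 : ∀ u ∈ Ioo a b, 0 ≤ f u) (hfM : ∀ u ∈ Ioo a b, f u ≤ M)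
    (hg : IntegrableOn g (Ioo a b)) (htail : ∀ t ∈ Icc a b, 0 ≤ ∫ u in t..b, g u) :
    0 ≤ ∫ u in Ioo a b, f u * g u := by
  refine le_of_forall_pos_le_add fun δ hδ => ?_
  set K := ∫ u in Ioo a b, |g u|
  have hK : 0 ≤ K := integral_nonneg fun _ => abs_nonneg _
  have hδK : δ / (K + 1) * K ≤ δ := by
    rw [div_mul_eq_mul_div, div_le_iff₀ (by positivity)]
    nlinarith
  linarith [neg_mul_le_setIntegral_mul_of_monotoneOn hf hf0 hfM hg htail
    (div_pos hδ (by positivity : (0 : ℝ) < K + 1))]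

theorem intervalIntegral_mul_nonneg_of_monotoneOn {f g : ℝ → ℝ} {a b M : ℝ} (hab : a ≤ b)
    (hf : MonotoneOn f (Ioo a b)) (hfM : ∀ u ∈ Ioo a b, |f u| ≤ M)
    (hg : IntervalIntegrable g volume a b)
    (hG : ∀ t ∈ Icc a b, ∫ u in a..t, g u ≤ 0) (hGb : ∫ u in a..b, g u = 0) :
    0 ≤ ∫ u in a..b, f u * g u := by
  have hg_Ioo : IntegrableOn g (Ioo a b) := (intervalIntegrable_iff_integrableOn_Ioo_of_le hab).1 hg
  have htail : ∀ t ∈ Icc a b, 0 ≤ ∫ u in t..b, g u := fun t ht => by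
    rw [← intervalIntegral.integral_interval_sub_left hg
      (hg.mono_set (uIcc_subset_uIcc_left (Icc_subset_uIcc ht))), hGb]
    linarith [hG t ht]
  have hGb_Ioo : ∫ u in Ioo a b, g u = 0 := by
    rw [← integral_Ioc_eq_integral_Ioo, ← intervalIntegral.integral_of_le hab, hGb]
  have hshift : ∫ u in Ioo a b, f u * g u = ∫ u in Ioo a b, (f u + M) * g u := by
    simp_rw [add_mul]
    rw [integral_add (integrableOn_mul_of_monotoneOn measurableSet_Ioo hf hfM hg_Ioo)
      (hg_Ioo.const_mul M), integral_const_mul, hGb_Ioo, mul_zero, add_zero]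
  rw [intervalIntegral.integral_of_le hab, integral_Ioc_eq_integral_Ioo, hshift]
  exact setIntegral_mul_nonneg_of_monotoneOn (M := M + M) (hf.add_const M)
    (fun u hu => by linarith [(abs_le.1 (hfM u hu)).1])
    (fun u hu => by linarith [(abs_le.1 (hfM u hu)).2]) hg_Ioo htail

theorem stmt_8_general (C₁ C₂ : Copula)
    (hle : ∀ u ∈ Set.Icc (0 : ℝ) 1, ∀ v ∈ Set.Icc (0 : ℝ) 1, C₁.toFun u v ≤ C₂.toFun u v)
    (α : ℝ) (hα : α ∈ Set.Ioo (0 : ℝ) 1)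
    (c₁ c₂ : ℝ → ℝ)
    (hc₁int : IntervalIntegrable c₁ volume 0 1)
    (hc₂int : IntervalIntegrable c₂ volume 0 1)
    (hc₁ : ∀ t ∈ Set.Icc (0 : ℝ) 1, (∫ u in (0 : ℝ)..t, c₁ u) = C₁.toFun t α)
    (hc₂ : ∀ t ∈ Set.Icc (0 : ℝ) 1, (∫ u in (0 : ℝ)..t, c₂ u) = C₂.toFun t α)
    (Finv : ℝ → ℝ) (hmono : MonotoneOn Finv (Set.Ioo 0 1))
    (M : ℝ) (hbdd : ∀ u ∈ Set.Ioo (0 : ℝ) 1, |Finv u| ≤ M) :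
    (∫ u in (0 : ℝ)..1, Finv u * ((1 - c₁ u) / (1 - α)))
      ≤ ∫ u in (0 : ℝ)..1, Finv u * ((1 - c₂ u) / (1 - α)) := by
  have hαI : α ∈ Icc (0 : ℝ) 1 := Ioo_subset_Icc_self hα
  have hG : ∀ t ∈ Icc (0 : ℝ) 1,
      ∫ u in (0 : ℝ)..t, (c₁ u - c₂ u) = C₁.toFun t α - C₂.toFun t α := fun t ht => by
    have hsub := uIcc_subset_uIcc_left (Icc_subset_uIcc ht)
    rw [intervalIntegral.integral_sub (hc₁int.mono_set hsub) (hc₂int.mono_set hsub),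
      hc₁ t ht, hc₂ t ht]
  have hkey : 0 ≤ ∫ u in (0 : ℝ)..1, Finv u * (c₁ u - c₂ u) :=
    intervalIntegral_mul_nonneg_of_monotoneOn zero_le_one hmono hbdd (hc₁int.sub hc₂int)
      (fun t ht => by rw [hG t ht]; exact sub_nonpos.2 (hle t ht α hαI))
      (by rw [hG 1 ⟨zero_le_one, le_rfl⟩, C₁.margin_left α hαI, C₂.margin_left α hαI, sub_self])
  have hint : ∀ c : ℝ → ℝ, IntervalIntegrable c volume 0 1 →
      IntervalIntegrable (fun u => Finv u * ((1 - c u) / (1 - α))) volume 0 1 := fun c hc =>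
    intervalIntegrable_mul_of_monotoneOn zero_le_one hmono hbdd
      ((intervalIntegrable_const.sub hc).div_const _)
  have hdiff : ∀ u, Finv u * ((1 - c₂ u) / (1 - α)) - Finv u * ((1 - c₁ u) / (1 - α))
      = Finv u * (c₁ u - c₂ u) / (1 - α) := fun u => by ring
  rw [← sub_nonneg, ← intervalIntegral.integral_sub (hint c₂ hc₂int) (hint c₁ hc₁int)]
  simp_rw [hdiff, intervalIntegral.integral_div]
  exact div_nonneg hkey (sub_nonneg.2 hα.2.le)

/-- If `C₁ ≤ C₂` pointwise (concordance order), `F⁻¹` is nondecreasing and bounded, and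
`cⱼ u = Cⱼ(α|u)` are the conditional distributions (so `∫₀ᵗ cⱼ = Cⱼ(t,α)`), then the weighted
integral of `F⁻¹` against `(1 − c₁)/(1−α)` is at most the one against `(1 − c₂)/(1−α)`. -/
theorem stmt_8 (C₁ C₂ : Copula)
    (hle : ∀ u ∈ Set.Icc (0 : ℝ) 1, ∀ v ∈ Set.Icc (0 : ℝ) 1, C₁.toFun u v ≤ C₂.toFun u v)
    (α : ℝ) (hα : α ∈ Set.Ioo (0 : ℝ) 1)
    (c₁ c₂ : ℝ → ℝ)
    (hc₁int : IntervalIntegrable c₁ volume 0 1)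
    (hc₂int : IntervalIntegrable c₂ volume 0 1)
    (hc₁b : ∀ u ∈ Set.Icc (0 : ℝ) 1, c₁ u ∈ Set.Icc (0 : ℝ) 1)
    (hc₂b : ∀ u ∈ Set.Icc (0 : ℝ) 1, c₂ u ∈ Set.Icc (0 : ℝ) 1)
    (hc₁ : ∀ t ∈ Set.Icc (0 : ℝ) 1, (∫ u in (0 : ℝ)..t, c₁ u) = C₁.toFun t α)
    (hc₂ : ∀ t ∈ Set.Icc (0 : ℝ) 1, (∫ u in (0 : ℝ)..t, c₂ u) = C₂.toFun t α)
    (Finv : ℝ → ℝ) (hmono : MonotoneOn Finv (Set.Ioo 0 1))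
    (M : ℝ) (hbdd : ∀ u ∈ Set.Ioo (0 : ℝ) 1, |Finv u| ≤ M)
    (h₁ : IntervalIntegrable (fun u => Finv u * ((1 - c₁ u) / (1 - α))) volume 0 1)
    (h₂ : IntervalIntegrable (fun u => Finv u * ((1 - c₂ u) / (1 - α))) volume 0 1) :
    (∫ u in (0 : ℝ)..1, Finv u * ((1 - c₁ u) / (1 - α)))
      ≤ ∫ u in (0 : ℝ)..1, Finv u * ((1 - c₂ u) / (1 - α)) :=
  stmt_8_general C₁ C₂ hle α hα c₁ c₂ hc₁int hc₂int hc₁ hc₂ Finv hmono M hbdd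
end

section
/- Let C be a bivariate copula whose conditional distribution C(α|u) is nonincreasing in u for every α (stochastic increasingness), and let F⁻¹ : (0,1) → ℝ be a nondecreasing bounded quantile function. Then for every α ∈ (0,1), ∫₀¹ F⁻¹(u) (1 − C(α|u))/(1−α) du ≥ ∫₀¹ F⁻¹(u) du, with strict inequality whenever F⁻¹ is non-constant on a set of positive measure and C is not the independence copula at level α. -/
/-!
Chebyshev's integral inequality: for `f`, `g` nondecreasing, `(f x - f y) (g x - g y) ≥ 0`, and
integrating this over the square gives `2 (∫ f g - ∫ f ∫ g) ≥ 0`. Stochastic increasingness makes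
`g = (1 - C(α|·)) / (1 - α)` a nondecreasing probability density on `(0, 1)`, so
`∫ F⁻¹ g ≥ ∫ F⁻¹`. If `F⁻¹` and `g` are both nonconstant, the integrand is positive on a
rectangle `[b, 1) × (0, a]` of positive measure, which makes the inequality strict.
-/

open MeasureTheory Set

lemma MonotoneOn.sub_mul_sub_nonneg {α : Type*} [LinearOrder α] {f g : α → ℝ} {s : Set α}
    (hf : MonotoneOn f s) (hg : MonotoneOn g s) {x y : α} (hx : x ∈ s) (hy : y ∈ s) :
    0 ≤ (f x - f y) * (g x - g y) := by
  rcases le_total x y with hxy | hyx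
  · exact mul_nonneg_of_nonpos_of_nonpos (sub_nonpos.2 (hf hx hy hxy))
      (sub_nonpos.2 (hg hx hy hxy))
  · exact mul_nonneg (sub_nonneg.2 (hf hy hx hyx)) (sub_nonneg.2 (hg hy hx hyx))

section Chebyshev

variable {Ω : Type*} [MeasurableSpace Ω] {μ : Measure Ω} {f g : Ω → ℝ} {s : Set Ω}

lemma exists_lt_of_not_ae_eq_const [NeZero μ] (hs : ∀ᵐ x ∂μ, x ∈ s)
    (hconst : ¬ ∃ c, ∀ᵐ x ∂μ, f x = c) : ∃ a ∈ s, ∃ b ∈ s, f a < f b := by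
  by_contra! hle
  obtain ⟨x₀, hx₀⟩ := hs.exists
  exact hconst ⟨f x₀, hs.mono fun x hx => le_antisymm (hle x₀ hx₀ x hx) (hle x hx x₀ hx₀)⟩

private lemma sub_mul_sub_eq (a b c d : ℝ) :
    (a - b) * (c - d) = (a * c + b * d) - (a * d + c * b) := by
  ring

lemma integrable_prod_sub_mul_sub [IsFiniteMeasure μ] (hf : Integrable f μ)
    (hg : Integrable g μ) (hfg : Integrable (fun x => f x * g x) μ) :
    Integrable (fun z : Ω × Ω => (f z.1 - f z.2) * (g z.1 - g z.2)) (μ.prod μ) := by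
  simp_rw [sub_mul_sub_eq]
  exact ((hfg.comp_fst μ).add (hfg.comp_snd μ)).sub ((hf.mul_prod hg).add (hg.mul_prod hf))

lemma ae_prod_sub_mul_sub_nonneg [SFinite μ] [LinearOrder Ω] (hs : ∀ᵐ x ∂μ, x ∈ s)
    (hf : MonotoneOn f s) (hg : MonotoneOn g s) : ∀ᵐ z ∂(μ.prod μ), 0 ≤ (f z.1 - f z.2) * (g z.1 - g z.2) :=
  ((Measure.quasiMeasurePreserving_fst.ae hs).and (Measure.quasiMeasurePreserving_snd.ae hs)).mono
    fun _ hz => hf.sub_mul_sub_nonneg hg hz.1 hz.2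

variable [IsProbabilityMeasure μ]

lemma integral_prod_sub_mul_sub (hf : Integrable f μ) (hg : Integrable g μ)
    (hfg : Integrable (fun x => f x * g x) μ) :
    ∫ z, (f z.1 - f z.2) * (g z.1 - g z.2) ∂(μ.prod μ)
      = 2 * (∫ x, f x * g x ∂μ - (∫ x, f x ∂μ) * ∫ x, g x ∂μ) := by
  have hfg₁ : Integrable (fun z : Ω × Ω => f z.1 * g z.1) (μ.prod μ) := hfg.comp_fst μ
  have hfg₂ : Integrable (fun z : Ω × Ω => f z.2 * g z.2) (μ.prod μ) := hfg.comp_snd μ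
  have hfg₃ : Integrable (fun z : Ω × Ω => f z.1 * g z.2) (μ.prod μ) := hf.mul_prod hg
  have hfg₄ : Integrable (fun z : Ω × Ω => g z.1 * f z.2) (μ.prod μ) := hg.mul_prod hf
  simp_rw [sub_mul_sub_eq]
  rw [integral_sub (hfg₁.fun_add hfg₂) (hfg₃.fun_add hfg₄), integral_add hfg₁ hfg₂,
    integral_add hfg₃ hfg₄, integral_fun_fst (fun x => f x * g x),
    integral_fun_snd (fun x => f x * g x), integral_prod_mul f g, integral_prod_mul g f]
  simp only [probReal_univ, one_smul]
  ring

variable [LinearOrder Ω]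

theorem integral_mul_integral_le_integral_mul_of_monotoneOn (hs : ∀ᵐ x ∂μ, x ∈ s)
    (hf : MonotoneOn f s) (hg : MonotoneOn g s) (hfi : Integrable f μ) (hgi : Integrable g μ)
    (hfgi : Integrable (fun x => f x * g x) μ) :
    (∫ x, f x ∂μ) * (∫ x, g x ∂μ) ≤ ∫ x, f x * g x ∂μ := by
  have := integral_nonneg_of_ae (ae_prod_sub_mul_sub_nonneg hs hf hg)
  rw [integral_prod_sub_mul_sub hfi hgi hfgi] at this
  linarith

theorem integral_mul_integral_lt_integral_mul_of_monotoneOn (hs : ∀ᵐ x ∂μ, x ∈ s)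
    (hf : MonotoneOn f s) (hg : MonotoneOn g s) (hfi : Integrable f μ) (hgi : Integrable g μ)
    (hfgi : Integrable (fun x => f x * g x) μ)
    (hlow : ∀ a ∈ s, 0 < μ (s ∩ Iic a)) (hhigh : ∀ b ∈ s, 0 < μ (s ∩ Ici b))
    (hf' : ∃ a ∈ s, ∃ b ∈ s, f a < f b) (hg' : ∃ a ∈ s, ∃ b ∈ s, g a < g b) :
    (∫ x, f x ∂μ) * (∫ x, g x ∂μ) < ∫ x, f x * g x ∂μ := by
  obtain ⟨a₁, ha₁, b₁, hb₁, hfab⟩ := hf'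
  obtain ⟨a₂, ha₂, b₂, hb₂, hgab⟩ := hg'
  have ha : min a₁ a₂ ∈ s := by rcases min_choice a₁ a₂ with h | h <;> rw [h] <;> assumption
  have hb : max b₁ b₂ ∈ s := by rcases max_choice b₁ b₂ with h | h <;> rw [h] <;> assumption
  have hrect : (s ∩ Ici (max b₁ b₂)) ×ˢ (s ∩ Iic (min a₁ a₂))
      ⊆ Function.support fun z : Ω × Ω => (f z.1 - f z.2) * (g z.1 - g z.2) := by
    rintro ⟨x, y⟩ ⟨⟨hx, hbx⟩, ⟨hy, hya⟩⟩
    have hfxy : f y < f x := calc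
      f y ≤ f a₁ := hf hy ha₁ (hya.trans (min_le_left _ _))
      _ < f b₁ := hfab
      _ ≤ f x := hf hb₁ hx ((le_max_left _ _).trans hbx)
    have hgxy : g y < g x := calc
      g y ≤ g a₂ := hg hy ha₂ (hya.trans (min_le_right _ _))
      _ < g b₂ := hgab
      _ ≤ g x := hg hb₂ hx ((le_max_right _ _).trans hbx)
    exact (mul_pos (sub_pos.2 hfxy) (sub_pos.2 hgxy)).ne'
  have hpos : 0 < ∫ z, (f z.1 - f z.2) * (g z.1 - g z.2) ∂(μ.prod μ) := by
    rw [integral_pos_iff_support_of_nonneg_ae (ae_prod_sub_mul_sub_nonneg hs hf hg)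
      (integrable_prod_sub_mul_sub hfi hgi hfgi)]
    refine lt_of_lt_of_le ?_ (measure_mono hrect)
    rw [Measure.prod_prod]
    exact ENNReal.mul_pos (hhigh _ hb).ne' (hlow _ ha).ne'
  rw [integral_prod_sub_mul_sub hfi hgi hfgi] at hpos
  linarith

end Chebyshev

lemma volume_restrict_Ioo_inter_Iic_pos {p q a : ℝ} (ha : a ∈ Ioo p q) :
    0 < volume.restrict (Ioo p q) (Ioo p q ∩ Iic a) := by
  rw [Measure.restrict_apply' measurableSet_Ioo]
  refine (isOpen_Ioo.measure_pos volume (nonempty_Ioo.2 ha.1)).trans_le (measure_mono ?_)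
  exact fun x hx => ⟨⟨⟨hx.1, hx.2.trans ha.2⟩, hx.2.le⟩, hx.1, hx.2.trans ha.2⟩

lemma volume_restrict_Ioo_inter_Ici_pos {p q b : ℝ} (hb : b ∈ Ioo p q) :
    0 < volume.restrict (Ioo p q) (Ioo p q ∩ Ici b) := by
  rw [Measure.restrict_apply' measurableSet_Ioo]
  refine (isOpen_Ioo.measure_pos volume (nonempty_Ioo.2 hb.2)).trans_le (measure_mono ?_)
  exact fun x hx => ⟨⟨⟨hb.1.trans hx.1, hx.2⟩, hx.1.le⟩, hb.1.trans hx.1, hx.2⟩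

theorem stmt_11_general (α : ℝ) (hα : α ∈ Set.Ioo (0 : ℝ) 1)
    (Ccond : ℝ → ℝ)
    (hanti : AntitoneOn Ccond (Set.Icc 0 1))
    (hCint : IntervalIntegrable Ccond volume 0 1)
    (htot : (∫ u in (0 : ℝ)..1, Ccond u) = α)
    (Finv : ℝ → ℝ) (hmono : MonotoneOn Finv (Set.Ioo 0 1))
    (hFint : IntervalIntegrable Finv volume 0 1)
    (hprod : IntervalIntegrable (fun u => Finv u * ((1 - Ccond u) / (1 - α))) volume 0 1) :
    ((∫ u in (0 : ℝ)..1, Finv u)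
        ≤ ∫ u in (0 : ℝ)..1, Finv u * ((1 - Ccond u) / (1 - α))) ∧
      ((¬ ∃ c : ℝ, ∀ᵐ u ∂(volume.restrict (Set.Ioo (0 : ℝ) 1)), Finv u = c) →
        (¬ ∀ᵐ u ∂(volume.restrict (Set.Ioo (0 : ℝ) 1)), Ccond u = α) →
        (∫ u in (0 : ℝ)..1, Finv u)
          < ∫ u in (0 : ℝ)..1, Finv u * ((1 - Ccond u) / (1 - α))) := by
  set μ := volume.restrict (Ioo (0 : ℝ) 1)
  have : IsProbabilityMeasure μ := ⟨by simp [μ]⟩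
  have hs : ∀ᵐ u ∂μ, u ∈ Ioo (0 : ℝ) 1 := ae_restrict_mem measurableSet_Ioo
  have integrable {φ : ℝ → ℝ} (h : IntervalIntegrable φ volume 0 1) : Integrable φ μ :=
    (intervalIntegrable_iff_integrableOn_Ioo_of_le zero_le_one).1 h
  simp only [intervalIntegral.integral_of_le zero_le_one, integral_Ioc_eq_integral_Ioo] at htot ⊢
  set g : ℝ → ℝ := fun u => (1 - Ccond u) / (1 - α)
  have h1α : 0 < 1 - α := sub_pos.2 hα.2
  have hgi : Integrable g μ := ((integrable_const 1).sub (integrable hCint)).div_const _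
  have hg_mono : MonotoneOn g (Ioo 0 1) := fun u hu v hv huv =>
    div_le_div_of_nonneg_right
      (sub_le_sub_left (hanti (Ioo_subset_Icc_self hu) (Ioo_subset_Icc_self hv) huv) 1)
      h1α.le
  have hg_int : ∫ u, g u ∂μ = 1 := by
    rw [integral_div, integral_sub (integrable_const 1) (integrable hCint), htot]
    simp [div_self h1α.ne']
  have hF := integrable hFint
  have hFg := integrable hprod
  refine ⟨?_, fun hF_const hC_const => ?_⟩
  · simpa [hg_int] using
      integral_mul_integral_le_integral_mul_of_monotoneOn hs hmono hg_mono hF hgi hFg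
  have hg_lt : ∃ a ∈ Ioo (0 : ℝ) 1, ∃ b ∈ Ioo 0 1, g a < g b := by
    refine exists_lt_of_not_ae_eq_const hs fun ⟨c, hc⟩ => hC_const ?_
    have hc1 : c = 1 := by rw [← hg_int, integral_congr_ae hc]; simp
    filter_upwards [hc] with u hu
    rwa [hc1, div_eq_one_iff_eq h1α.ne', sub_right_inj] at hu
  simpa [hg_int] using integral_mul_integral_lt_integral_mul_of_monotoneOn hs hmono hg_mono
    hF hgi hFg (fun _ => volume_restrict_Ioo_inter_Iic_pos)
    (fun _ => volume_restrict_Ioo_inter_Ici_pos) (exists_lt_of_not_ae_eq_const hs hF_const) hg_lt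

/-- If the conditional distribution `u ↦ C(α|u)` of a copula is nonincreasing (stochastic
increasingness) and `F⁻¹` is nondecreasing and bounded, then
`∫₀¹ F⁻¹(u)(1 − C(α|u))/(1−α) du ≥ ∫₀¹ F⁻¹(u) du`, with strict inequality whenever `F⁻¹` is
non-constant on a set of positive measure and `C` is not the independence copula at level `α`. -/
theorem stmt_11 (α : ℝ) (hα : α ∈ Set.Ioo (0 : ℝ) 1)
    (Ccond : ℝ → ℝ)
    (hanti : AntitoneOn Ccond (Set.Icc 0 1))
    (hbound : ∀ u ∈ Set.Icc (0 : ℝ) 1, Ccond u ∈ Set.Icc (0 : ℝ) 1)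
    (hCint : IntervalIntegrable Ccond volume 0 1)
    (htot : (∫ u in (0 : ℝ)..1, Ccond u) = α)
    (Finv : ℝ → ℝ) (hmono : MonotoneOn Finv (Set.Ioo 0 1))
    (M : ℝ) (hbdd : ∀ u ∈ Set.Ioo (0 : ℝ) 1, |Finv u| ≤ M)
    (hFint : IntervalIntegrable Finv volume 0 1)
    (hprod : IntervalIntegrable (fun u => Finv u * ((1 - Ccond u) / (1 - α))) volume 0 1) :
    ((∫ u in (0 : ℝ)..1, Finv u)
        ≤ ∫ u in (0 : ℝ)..1, Finv u * ((1 - Ccond u) / (1 - α))) ∧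
      ((¬ ∃ c : ℝ, ∀ᵐ u ∂(volume.restrict (Set.Ioo (0 : ℝ) 1)), Finv u = c) →
        (¬ ∀ᵐ u ∂(volume.restrict (Set.Ioo (0 : ℝ) 1)), Ccond u = α) →
        (∫ u in (0 : ℝ)..1, Finv u)
          < ∫ u in (0 : ℝ)..1, Finv u * ((1 - Ccond u) / (1 - α))) :=
  stmt_11_general α hα Ccond hanti hCint htot Finv hmono hFint hprod
end

section
/- Suppose W ⫫ (Y(0), Y(1), S(0), S(1)) | X (unconfoundedness) with propensity score ρ(X) := P(W = 1 | X) ∈ (0,1) a.s., and let Y := W·Y(1) + (1−W)·Y(0), S := W·S(1) + (1−W)·S(0). Then E[Y(1)] = E[ (1/ρ(X)) E[Y·W | S, X] ] = E[ (ρ(S,X)/ρ(X)) E[Y | W = 1, S, X] ], where ρ(S,X) := P(W = 1 | S, X). -/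
/-!
Unconfoundedness makes `W` and `Y(1)` conditionally independent given `X`, so
`E[W Y(1) | X] = ρ(X) E[Y(1) | X]` (integrate the unconditional product rule against the
conditional-expectation kernel). Hence the inverse-propensity weight `W Y(1) / ρ(X)` has
conditional expectation `E[Y(1) | X]` and mean `E[Y(1)]`; the same identity for `|Y(1)|` shows that
the weight is integrable. As `σ(X) ⊆ σ(S, X)`, the factor `1 / ρ(X)` can be pulled out of the
conditional expectation of the weight given `(S, X)`, which gives the first equality; the second
is cancellation of `ρ(S, X) > 0`.
-/

open MeasureTheory ProbabilityTheory
open scoped ENNReal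

section

variable {Ω : Type*} {m mΩ : MeasurableSpace Ω} {μ : Measure Ω}

theorem condExp_mul_of_condIndepFun [StandardBorelSpace Ω] [IsFiniteMeasure μ]
    (hm : m ≤ mΩ) {f g : Ω → ℝ} (hfg : CondIndepFun m hm f g μ) (hf : Measurable f)
    (hg : Measurable g) (hf_int : Integrable f μ) (hg_int : Integrable g μ)
    (hfg_int : Integrable (f * g) μ) :
    μ[f * g | m] =ᵐ[μ] μ[f | m] * μ[g | m] := by
  have h_indep : ∀ᵐ ω ∂μ, IndepFun f g (condExpKernel μ m ω) := by
    refine ae_of_ae_trim hm ?_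
    refine ((condIndepFun_iff_map_prod_eq_prod_map_map hf hg).1 hfg).mono fun ω hω => ?_
    rw [indepFun_iff_map_prod_eq_prod_map_map hf.aemeasurable hg.aemeasurable]
    rwa [Kernel.map_apply _ (hf.prodMk hg), Kernel.prod_apply, Kernel.map_apply _ hf,
      Kernel.map_apply _ hg] at hω
  filter_upwards [condExp_ae_eq_integral_condExpKernel hm hfg_int,
    condExp_ae_eq_integral_condExpKernel hm hf_int,
    condExp_ae_eq_integral_condExpKernel hm hg_int, h_indep] with ω hfg_eq hf_eq hg_eq hω
  rw [Pi.mul_apply, hfg_eq, hf_eq, hg_eq]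
  exact hω.integral_mul_eq_mul_integral hf.aestronglyMeasurable hg.aestronglyMeasurable

theorem lintegral_ofReal_condExp_mul (hm : m ≤ mΩ) [SigmaFinite (μ.trim hm)] {g : Ω → ℝ}
    (hg_int : Integrable g μ) (hg_nonneg : 0 ≤ᵐ[μ] g) {h : Ω → ℝ≥0∞} (hh : Measurable[m] h) :
    ∫⁻ ω, ENNReal.ofReal (μ[g | m] ω) * h ω ∂μ = ∫⁻ ω, ENNReal.ofReal (g ω) * h ω ∂μ := by
  set ν := μ.withDensity fun ω => ENNReal.ofReal (g ω)
  set ν' := μ.withDensity fun ω => ENNReal.ofReal (μ[g | m] ω)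
  have h_trim : ν'.trim hm = ν.trim hm := by
    refine @Measure.ext Ω m _ _ fun s hs => ?_
    rw [trim_measurableSet_eq hm hs, trim_measurableSet_eq hm hs,
      withDensity_apply _ (hm s hs), withDensity_apply _ (hm s hs),
      ← ofReal_integral_eq_lintegral_ofReal hg_int.restrict (ae_restrict_of_ae hg_nonneg),
      ← ofReal_integral_eq_lintegral_ofReal integrable_condExp.restrict
        (ae_restrict_of_ae (condExp_nonneg hg_nonneg)),
      setIntegral_condExp hm hg_int hs]
  have hh' : AEMeasurable h μ := (hh.mono hm le_rfl).aemeasurable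
  calc ∫⁻ ω, ENNReal.ofReal (μ[g | m] ω) * h ω ∂μ
      = ∫⁻ ω, h ω ∂ν' := (lintegral_withDensity_eq_lintegral_mul₀
          (stronglyMeasurable_condExp.mono hm).measurable.ennreal_ofReal.aemeasurable hh').symm
    _ = ∫⁻ ω, h ω ∂ν := by rw [← lintegral_trim hm hh, h_trim, lintegral_trim hm hh]
    _ = ∫⁻ ω, ENNReal.ofReal (g ω) * h ω ∂μ := lintegral_withDensity_eq_lintegral_mul₀
          hg_int.aemeasurable.ennreal_ofReal hh'

theorem condExp_div_of_stronglyMeasurable (hm : m ≤ mΩ) [SigmaFinite (μ.trim hm)]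
    {f g : Ω → ℝ} (hf : StronglyMeasurable[m] f) (hg : Integrable g μ)
    (hgf : Integrable (fun ω => g ω / f ω) μ) :
    μ[fun ω => g ω / f ω | m] =ᵐ[μ] fun ω => μ[g | m] ω / f ω := by
  have h_inv_mul : (fun ω => g ω / f ω) = f⁻¹ * g := by
    funext ω
    simp [div_eq_inv_mul]
  rw [h_inv_mul] at hgf ⊢
  have h_pull := condExp_mul_of_stronglyMeasurable_left hf.measurable.inv.stronglyMeasurable hgf hg
  filter_upwards [h_pull] with ω hω
  simp [hω, div_eq_inv_mul]

theorem integral_condExp_div_of_stronglyMeasurable (hm : m ≤ mΩ) [SigmaFinite (μ.trim hm)]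
    {f g : Ω → ℝ} (hf : StronglyMeasurable[m] f) (hg : Integrable g μ)
    (hgf : Integrable (fun ω => g ω / f ω) μ) :
    ∫ ω, μ[g | m] ω / f ω ∂μ = ∫ ω, g ω / f ω ∂μ := by
  rw [← integral_congr_ae (condExp_div_of_stronglyMeasurable hm hf hg hgf), integral_condExp hm]

section InverseProbabilityWeighting

variable [StandardBorelSpace Ω] [IsFiniteMeasure μ] (hm : m ≤ mΩ) {W Y : Ω → ℝ}

theorem integrable_mul_div_condExp (hWY : CondIndepFun m hm W Y μ) (hW : Measurable W)
    (hY : Measurable Y) (hW_nonneg : 0 ≤ W) (hW_int : Integrable W μ) (hY_int : Integrable Y μ)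
    (hWY_int : Integrable (W * Y) μ) (hρ : ∀ᵐ ω ∂μ, 0 < μ[W | m] ω) :
    Integrable (fun ω => W ω * Y ω / μ[W | m] ω) μ := by
  set ρ := μ[W | m]
  have hρ_meas : Measurable[m] ρ := stronglyMeasurable_condExp.measurable
  have hWY_abs : CondIndepFun m hm W (fun ω => |Y ω|) μ := hWY.comp measurable_id measurable_abs
  have hWY_abs_int : Integrable (W * fun ω => |Y ω|) μ := by
    refine hWY_int.abs.congr (ae_of_all _ fun ω => ?_)
    simp [abs_mul, abs_of_nonneg (hW_nonneg ω)]
  have h_prod := condExp_mul_of_condIndepFun hm hWY_abs hW hY.abs hW_int hY_int.abs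
    hWY_abs_int
  have h_lintegral : ∫⁻ ω, ENNReal.ofReal (W ω * |Y ω| / ρ ω) ∂μ
      = ∫⁻ ω, ENNReal.ofReal (μ[fun ω => |Y ω| | m] ω) ∂μ := calc
    _ = ∫⁻ ω, ENNReal.ofReal ((W * fun ω => |Y ω|) ω) * (ENNReal.ofReal (ρ ω))⁻¹ ∂μ := by
      refine lintegral_congr_ae (hρ.mono fun ω hω => ?_)
      simp only [Pi.mul_apply]
      rw [ENNReal.ofReal_div_of_pos hω, div_eq_mul_inv]
    _ = ∫⁻ ω, ENNReal.ofReal (μ[W * fun ω => |Y ω| | m] ω) * (ENNReal.ofReal (ρ ω))⁻¹ ∂μ :=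
      (lintegral_ofReal_condExp_mul hm hWY_abs_int
        (ae_of_all _ fun ω => mul_nonneg (hW_nonneg ω) (abs_nonneg _))
        hρ_meas.ennreal_ofReal.inv).symm
    _ = _ := by
      refine lintegral_congr_ae ?_
      filter_upwards [h_prod, hρ] with ω h_prod_ω hρ_ω
      rw [h_prod_ω, Pi.mul_apply, ENNReal.ofReal_mul hρ_ω.le, mul_comm, ← mul_assoc,
        ENNReal.inv_mul_cancel (ENNReal.ofReal_pos.2 hρ_ω).ne' ENNReal.ofReal_ne_top, one_mul]
  have hρ_meas' : Measurable ρ := hρ_meas.mono hm le_rfl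
  have h_int_abs : Integrable (fun ω => W ω * |Y ω| / ρ ω) μ := by
    refine ⟨(hW.mul hY.abs |>.div hρ_meas').aestronglyMeasurable, ?_⟩
    rw [hasFiniteIntegral_iff_ofReal (hρ.mono fun ω hω =>
      div_nonneg (mul_nonneg (hW_nonneg ω) (abs_nonneg _)) hω.le), h_lintegral]
    exact integrable_condExp.lintegral_lt_top
  refine h_int_abs.mono' (hW.mul hY |>.div hρ_meas').aestronglyMeasurable
    (hρ.mono fun ω hω => le_of_eq ?_)
  rw [norm_div, norm_mul, Real.norm_of_nonneg (hW_nonneg ω),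
    Real.norm_of_nonneg hω.le, Real.norm_eq_abs]

theorem integral_mul_div_condExp (hWY : CondIndepFun m hm W Y μ) (hW : Measurable W)
    (hY : Measurable Y) (hW_nonneg : 0 ≤ W) (hW_int : Integrable W μ) (hY_int : Integrable Y μ)
    (hWY_int : Integrable (W * Y) μ) (hρ : ∀ᵐ ω ∂μ, 0 < μ[W | m] ω) :
    ∫ ω, W ω * Y ω / μ[W | m] ω ∂μ = ∫ ω, Y ω ∂μ := by
  have h_prod := condExp_mul_of_condIndepFun hm hWY hW hY hW_int hY_int hWY_int
  calc ∫ ω, W ω * Y ω / μ[W | m] ω ∂μ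
      = ∫ ω, μ[W * Y | m] ω / μ[W | m] ω ∂μ :=
        (integral_condExp_div_of_stronglyMeasurable hm stronglyMeasurable_condExp hWY_int
          (integrable_mul_div_condExp hm hWY hW hY hW_nonneg hW_int hY_int hWY_int hρ)).symm
    _ = ∫ ω, μ[Y | m] ω ∂μ := by
      refine integral_congr_ae ?_
      filter_upwards [h_prod, hρ] with ω h_prod_ω hρ_ω
      rw [h_prod_ω, Pi.mul_apply, mul_div_cancel_left₀ _ hρ_ω.ne']
    _ = ∫ ω, Y ω ∂μ := integral_condExp hm

end InverseProbabilityWeighting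

end

theorem stmt_17_general {Ω 𝒳 : Type*} {m0 : MeasurableSpace Ω} [StandardBorelSpace Ω]
    [MeasurableSpace 𝒳]
    (μ : Measure Ω) [IsProbabilityMeasure μ]
    (Y0 Y1 S0 S1 W : Ω → ℝ) (X : Ω → 𝒳)
    (hY1 : Measurable Y1)
    (hWm : Measurable W)
    (hW01 : ∀ ω, W ω = 0 ∨ W ω = 1)
    (hY1int : Integrable Y1 μ)
    (Yobs Sobs : Ω → ℝ)
    (hYobs : Yobs = fun ω => W ω * Y1 ω + (1 - W ω) * Y0 ω)
    (mX : MeasurableSpace Ω)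
    (hmXdef : mX = MeasurableSpace.comap X inferInstance)
    (hmX : mX ≤ m0)
    (mSX : MeasurableSpace Ω)
    (hmSXdef : mSX = MeasurableSpace.comap (fun ω => (Sobs ω, X ω)) inferInstance)
    (hmSX : mSX ≤ m0)
    (hunconf : CondIndepFun mX hmX W (fun ω => (Y0 ω, Y1 ω, S0 ω, S1 ω)) μ)
    (hρX : ∀ᵐ ω ∂μ, 0 < (μ[W | mX]) ω ∧ (μ[W | mX]) ω < 1)
    (hρSX : ∀ᵐ ω ∂μ, 0 < (μ[W | mSX]) ω ∧ (μ[W | mSX]) ω < 1) :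
    (∫ ω, Y1 ω ∂μ)
        = (∫ ω, (μ[fun ω' => Yobs ω' * W ω' | mSX]) ω / (μ[W | mX]) ω ∂μ) ∧
      (∫ ω, (μ[fun ω' => Yobs ω' * W ω' | mSX]) ω / (μ[W | mX]) ω ∂μ)
        = ∫ ω, ((μ[W | mSX]) ω / (μ[W | mX]) ω)
            * ((μ[fun ω' => Yobs ω' * W ω' | mSX]) ω / (μ[W | mSX]) ω) ∂μ := by
  have hW_nonneg : 0 ≤ W := fun ω => by rcases hW01 ω with h | h <;> simp [h]
  have hW_bound : ∀ ω, ‖W ω‖ ≤ 1 := fun ω => by rcases hW01 ω with h | h <;> simp [h]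
  have hYobs_mul_W : (fun ω => Yobs ω * W ω) = W * Y1 := by
    funext ω
    rcases hW01 ω with h | h <;> simp [hYobs, h]
  have hmX_le_mSX : mX ≤ mSX := by
    rw [hmXdef, hmSXdef]
    exact (measurable_snd.comp (comap_measurable (fun ω => (Sobs ω, X ω)))).comap_le
  have hWY1 : CondIndepFun mX hmX W Y1 μ :=
    hunconf.comp measurable_id (measurable_fst.comp measurable_snd)
  have hW_int : Integrable W μ := .of_bound hWm.aestronglyMeasurable 1 (ae_of_all _ hW_bound)
  have hWY1_int : Integrable (W * Y1) μ :=
    hY1int.bdd_mul hWm.aestronglyMeasurable (ae_of_all _ hW_bound)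
  have hρX_pos : ∀ᵐ ω ∂μ, 0 < μ[W | mX] ω := hρX.mono fun _ h => h.1
  refine ⟨?_, integral_congr_ae (hρSX.mono fun ω hω => ?_)⟩
  · rw [hYobs_mul_W, integral_condExp_div_of_stronglyMeasurable hmSX
      (stronglyMeasurable_condExp.mono hmX_le_mSX) hWY1_int
      (integrable_mul_div_condExp hmX hWY1 hWm hY1 hW_nonneg hW_int hY1int hWY1_int hρX_pos)]
    exact (integral_mul_div_condExp hmX hWY1 hWm hY1 hW_nonneg hW_int hY1int hWY1_int
      hρX_pos).symm
  · field_simp [hω.1.ne']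

/-- Under unconfoundedness `W ⫫ (Y(0),Y(1),S(0),S(1)) | X` with propensity score
`ρ(X) = P(W=1 | X) ∈ (0,1)` a.s., writing `Y = W·Y(1)+(1−W)·Y(0)`,
`S = W·S(1)+(1−W)·S(0)` and `ρ(S,X) = P(W=1 | S,X)`, one has
`E[Y(1)] = E[(1/ρ(X)) E[Y·W | S,X]] = E[(ρ(S,X)/ρ(X)) E[Y | W=1, S,X]]`,
where `E[Y | W=1, S,X] = E[Y·W | S,X]/ρ(S,X)`. -/
theorem stmt_17 {Ω 𝒳 : Type*} {m0 : MeasurableSpace Ω} [StandardBorelSpace Ω]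
    [MeasurableSpace 𝒳]
    (μ : Measure Ω) [IsProbabilityMeasure μ]
    (Y0 Y1 S0 S1 W : Ω → ℝ) (X : Ω → 𝒳)
    (hY0 : Measurable Y0) (hY1 : Measurable Y1)
    (hS0 : Measurable S0) (hS1 : Measurable S1)
    (hWm : Measurable W) (hXm : Measurable X)
    (hW01 : ∀ ω, W ω = 0 ∨ W ω = 1)
    (hY0int : Integrable Y0 μ) (hY1int : Integrable Y1 μ)
    (Yobs Sobs : Ω → ℝ)
    (hYobs : Yobs = fun ω => W ω * Y1 ω + (1 - W ω) * Y0 ω)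
    (hSobs : Sobs = fun ω => W ω * S1 ω + (1 - W ω) * S0 ω)
    (mX : MeasurableSpace Ω)
    (hmXdef : mX = MeasurableSpace.comap X inferInstance)
    (hmX : mX ≤ m0)
    (mSX : MeasurableSpace Ω)
    (hmSXdef : mSX = MeasurableSpace.comap (fun ω => (Sobs ω, X ω)) inferInstance)
    (hmSX : mSX ≤ m0)
    (hunconf : CondIndepFun mX hmX W (fun ω => (Y0 ω, Y1 ω, S0 ω, S1 ω)) μ)
    (hρX : ∀ᵐ ω ∂μ, 0 < (μ[W | mX]) ω ∧ (μ[W | mX]) ω < 1)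
    (hρSX : ∀ᵐ ω ∂μ, 0 < (μ[W | mSX]) ω ∧ (μ[W | mSX]) ω < 1) :
    (∫ ω, Y1 ω ∂μ)
        = (∫ ω, (μ[fun ω' => Yobs ω' * W ω' | mSX]) ω / (μ[W | mX]) ω ∂μ) ∧
      (∫ ω, (μ[fun ω' => Yobs ω' * W ω' | mSX]) ω / (μ[W | mX]) ω ∂μ)
        = ∫ ω, ((μ[W | mSX]) ω / (μ[W | mX]) ω)
            * ((μ[fun ω' => Yobs ω' * W ω' | mSX]) ω / (μ[W | mSX]) ω) ∂μ :=
  stmt_17_general μ Y0 Y1 S0 S1 W X hY1 hWm hW01 hY1int Yobs Sobs hYobs mX hmXdef hmX mSX hmSXdef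
    hmSX hunconf hρX hρSX
end
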